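/- arXiv:1406.4026 — 2 statements merged into one kernel-verified Lean document; each statement's English description precedes it below -/
import Mathlib

section
/- Let n, m be natural numbers, let b : ℝ × ℝⁿ → ℝⁿ, σ : ℝ × ℝⁿ → (n×m real matrices), V : ℝ × ℝⁿ → ℝ, and let J : ℝ × ℝⁿ → ℝ be differentiable in t and twice continuously differentiable in x at a point (t,x). Write ∇J for the spatial gradient and Hess J for the spatial Hessian matrix of J. If at (t,x) the Hamilton–Jacobi–Bellman equation -∂_t J = V - (1/2) ⟪σσᵀ ∇J, ∇J⟫ + ⟪b, ∇J⟫ + (1/2) Tr(σσᵀ · Hess J) holds, then ψ := exp(-J) satisfies ∂_t ψ + ⟪b, ∇ψ⟫ + (1/2) Tr(σσᵀ · Hess ψ) = V ψ at (t,x). -/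
open Matrix

/-- Spatial partial derivative of `f : ℝⁿ → ℝ` in direction `i`. -/
noncomputable def spatialPDeriv {n : ℕ} (f : (Fin n → ℝ) → ℝ) (i : Fin n)
    (y : Fin n → ℝ) : ℝ :=
  fderiv ℝ f y (Pi.single i 1)

/-- Spatial gradient of `f : ℝⁿ → ℝ`. -/
noncomputable def spatialGrad {n : ℕ} (f : (Fin n → ℝ) → ℝ) (y : Fin n → ℝ) :
    Fin n → ℝ :=
  fun i => spatialPDeriv f i y

/-- Spatial Hessian matrix of `f : ℝⁿ → ℝ`. -/
noncomputable def spatialHessian {n : ℕ} (f : (Fin n → ℝ) → ℝ) (y : Fin n → ℝ) :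
    Matrix (Fin n) (Fin n) ℝ :=
  fun i j => spatialPDeriv (spatialPDeriv f j) i y

/-! For `ψ = exp (-J)` the chain rule gives `∂ψ = -ψ ∂J` and
`Hess ψ = ψ (∇J ∇Jᵀ - Hess J)`. The rank-one part contributes `⟪σσᵀ∇J, ∇J⟫` to
`Tr (σσᵀ Hess ψ)`, which cancels the quadratic term of the HJB equation multiplied by `ψ`,
so what remains is linear in `ψ`. -/

open Filter Topology

variable {n : ℕ} {f g : (Fin n → ℝ) → ℝ} {x : Fin n → ℝ}

lemma HasFDerivAt.spatialPDeriv_eq {f' : (Fin n → ℝ) →L[ℝ] ℝ} (hf : HasFDerivAt f f' x)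
    (i : Fin n) : spatialPDeriv f i x = f' (Pi.single i 1) := by
  rw [spatialPDeriv, hf.fderiv]

lemma Filter.EventuallyEq.spatialPDeriv_eq (h : f =ᶠ[𝓝 x] g) (i : Fin n) :
    spatialPDeriv f i x = spatialPDeriv g i x := by
  rw [spatialPDeriv, spatialPDeriv, h.fderiv_eq]

lemma ContDiffAt.differentiableAt_spatialPDeriv (hf : ContDiffAt ℝ 2 f x) (i : Fin n) :
    DifferentiableAt ℝ (spatialPDeriv f i) x :=
  ((ContinuousLinearMap.apply ℝ ℝ (Pi.single i 1 : Fin n → ℝ)).contDiff.contDiffAt.comp x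
    (hf.fderiv_right (m := 1) le_rfl)).differentiableAt one_ne_zero

lemma spatialPDeriv_exp_neg (hf : DifferentiableAt ℝ f x) (i : Fin n) :
    spatialPDeriv (fun y => Real.exp (-f y)) i x =
      -(Real.exp (-f x) * spatialPDeriv f i x) := by
  have hexp : HasFDerivAt (fun y => Real.exp (-f y)) _ x := hf.hasFDerivAt.neg.exp
  rw [hexp.spatialPDeriv_eq, spatialPDeriv]
  simp

lemma spatialGrad_exp_neg (hf : DifferentiableAt ℝ f x) :
    spatialGrad (fun y => Real.exp (-f y)) x = -(Real.exp (-f x) • spatialGrad f x) :=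
  funext (spatialPDeriv_exp_neg hf)

lemma spatialHessian_exp_neg (hf : ContDiffAt ℝ 2 f x) :
    spatialHessian (fun y => Real.exp (-f y)) x =
      Real.exp (-f x) •
        (vecMulVec (spatialGrad f x) (spatialGrad f x) - spatialHessian f x) := by
  ext i j
  have hf_near : ∀ᶠ y in 𝓝 x, DifferentiableAt ℝ f y :=
    (hf.eventually (by simp)).mono fun y hy => hy.differentiableAt two_ne_zero
  have hpartial : spatialPDeriv (fun y => Real.exp (-f y)) j =ᶠ[𝓝 x]
      fun y => -Real.exp (-f y) * spatialPDeriv f j y :=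
    hf_near.mono fun y hy => by rw [spatialPDeriv_exp_neg hy]; ring
  have hprod : HasFDerivAt (fun y => -Real.exp (-f y) * spatialPDeriv f j y) _ x :=
    (hf.differentiableAt two_ne_zero).hasFDerivAt.neg.exp.neg.mul
      (hf.differentiableAt_spatialPDeriv j).hasFDerivAt
  change spatialPDeriv (spatialPDeriv _ j) i x = _
  rw [hpartial.spatialPDeriv_eq, hprod.spatialPDeriv_eq]
  simp only [Pi.neg_apply, neg_smul, spatialPDeriv, smul_neg, neg_neg, _root_.add_apply,
    _root_.neg_apply, _root_.smul_apply, smul_eq_mul, Matrix.smul_apply, Matrix.sub_apply,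
    vecMulVec_apply, spatialGrad, spatialHessian]
  ring

/-- Logarithmic transformation linearizing the `n`-dimensional HJB equation:
if `J` satisfies `-∂ₜJ = V - (1/2)⟪σσᵀ∇J, ∇J⟫ + ⟪b, ∇J⟫ + (1/2)Tr(σσᵀ Hess J)` at `(t,x)`,
with `J` differentiable in `t` and twice continuously differentiable in `x` at `(t,x)`,
then `ψ := exp (-J)` satisfies `∂ₜψ + ⟪b, ∇ψ⟫ + (1/2)Tr(σσᵀ Hess ψ) = V ψ` at `(t,x)`. -/
theorem colehopf_hjb_to_linear_multidim (n m : ℕ)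
    (b : ℝ × (Fin n → ℝ) → Fin n → ℝ)
    (σ : ℝ × (Fin n → ℝ) → Matrix (Fin n) (Fin m) ℝ)
    (V : ℝ × (Fin n → ℝ) → ℝ)
    (J : ℝ × (Fin n → ℝ) → ℝ) (t : ℝ) (x : Fin n → ℝ)
    (hJt : DifferentiableAt ℝ (fun s => J (s, x)) t)
    (hJx : ContDiffAt ℝ 2 (fun y => J (t, y)) x)
    (hhjb : -deriv (fun s => J (s, x)) t =
      V (t, x) -
        (1 / 2 : ℝ) *
          ((σ (t, x) * (σ (t, x))ᵀ).mulVec (spatialGrad (fun y => J (t, y)) x) ⬝ᵥ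
            spatialGrad (fun y => J (t, y)) x) +
        (b (t, x) ⬝ᵥ spatialGrad (fun y => J (t, y)) x) +
        (1 / 2 : ℝ) *
          (σ (t, x) * (σ (t, x))ᵀ * spatialHessian (fun y => J (t, y)) x).trace) :
    let ψ : ℝ × (Fin n → ℝ) → ℝ := fun p => Real.exp (-J p)
    deriv (fun s => ψ (s, x)) t + (b (t, x) ⬝ᵥ spatialGrad (fun y => ψ (t, y)) x) +
      (1 / 2 : ℝ) * (σ (t, x) * (σ (t, x))ᵀ * spatialHessian (fun y => ψ (t, y)) x).trace =
      V (t, x) * ψ (t, x) := by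
  intro ψ
  simp only [ψ]
  have hψt : HasDerivAt (fun s => Real.exp (-J (s, x)))
      (Real.exp (-J (t, x)) * -deriv (fun s => J (s, x)) t) t :=
    hJt.hasDerivAt.neg.exp
  rw [hψt.deriv, spatialGrad_exp_neg (hJx.differentiableAt two_ne_zero),
    spatialHessian_exp_neg hJx, Matrix.mul_smul, trace_smul, Matrix.mul_sub, trace_sub,
    mul_vecMulVec, trace_vecMulVec, dotProduct_neg, dotProduct_smul, smul_eq_mul,
    smul_eq_mul, hhjb]
  ring
end

section
/- Let Q > 0 and t₁ be real numbers, and define J : ℝ × ℝ → ℝ by J(t,x) = Q (log x)² / (2(Q(t₁ - t) + 1)) + (1/2) log(Q(t₁ - t) + 1). Then for every t ≤ t₁ and every x > 0, J satisfies the Hamilton–Jacobi–Bellman equation of the geometric Brownian motion control problem: ∂_t J(t,x) = (1/2) (x ∂_x J(t,x))² - (x/2) ∂_x J(t,x) - (1/2) x² ∂_{xx} J(t,x), together with the boundary condition J(t₁, x) = (Q/2)(log x)². -/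
/-!
Writing `a(t) = Q(t₁ - t) + 1` and `L = log x`, one has `∂ₜJ = Q²L²/(2a²) - Q/(2a)`,
`x ∂ₓJ = QL/a` and `x² ∂ₓₓJ = Q(1 - L)/a`, so both sides of the HJB equation reduce to the
same rational expression in `Q`, `L` and `a`; the quadratic-in-`log x` ansatz closes up because
the operator `x ∂ₓ` acts on functions of `log x` as plain differentiation in `log x`.
-/

/-- Optimal cost-to-go of the geometric Brownian motion control problem. -/
noncomputable def gbmJ (Q t₁ : ℝ) : ℝ × ℝ → ℝ := fun p =>
  Q * (Real.log p.2) ^ 2 / (2 * (Q * (t₁ - p.1) + 1)) +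
    (1 / 2 : ℝ) * Real.log (Q * (t₁ - p.1) + 1)

open Real Filter Topology

theorem hasDerivAt_log_div_self {x : ℝ} (hx : x ≠ 0) :
    HasDerivAt (fun y => log y / y) ((1 - log x) / x ^ 2) x := by
  refine ((hasDerivAt_log hx).div (hasDerivAt_id x) hx).congr_deriv ?_
  simp only [id_eq, mul_one]
  field_simp

theorem hasDerivAt_gbmJ_time (Q t₁ x : ℝ) {t : ℝ} (ht : Q * (t₁ - t) + 1 ≠ 0) :
    HasDerivAt (fun s => gbmJ Q t₁ (s, x))
      (Q ^ 2 * log x ^ 2 / (2 * (Q * (t₁ - t) + 1) ^ 2) - Q / (2 * (Q * (t₁ - t) + 1))) t := by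
  have ha : HasDerivAt (fun s => Q * (t₁ - s) + 1) (-Q) t := by
    simpa using (((hasDerivAt_id t).const_sub t₁).const_mul Q).add_const 1
  refine (((hasDerivAt_const t (Q * log x ^ 2)).div (ha.const_mul 2) (by simpa)).add
    ((ha.log ht).const_mul (1 / 2))).congr_deriv ?_
  field_simp
  ring

theorem hasDerivAt_gbmJ_space (Q t₁ t : ℝ) {y : ℝ} (hy : y ≠ 0) :
    HasDerivAt (fun y => gbmJ Q t₁ (t, y)) (Q / (Q * (t₁ - t) + 1) * (log y / y)) y := by
  refine (((((hasDerivAt_log hy).pow 2).const_mul Q).div_const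
    (2 * (Q * (t₁ - t) + 1))).add_const (1 / 2 * log (Q * (t₁ - t) + 1))).congr_deriv ?_
  rw [← div_div]
  simp only [Nat.cast_ofNat]
  ring

theorem deriv_gbmJ_space_eventuallyEq (Q t₁ t : ℝ) {x : ℝ} (hx : x ≠ 0) :
    deriv (fun y => gbmJ Q t₁ (t, y)) =ᶠ[𝓝 x] fun y => Q / (Q * (t₁ - t) + 1) * (log y / y) :=
  eventually_ne_nhds hx |>.mono fun _ hy => (hasDerivAt_gbmJ_space Q t₁ t hy).deriv

theorem hasDerivAt_deriv_gbmJ_space (Q t₁ t : ℝ) {x : ℝ} (hx : x ≠ 0) :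
    HasDerivAt (deriv fun y => gbmJ Q t₁ (t, y))
      (Q / (Q * (t₁ - t) + 1) * ((1 - log x) / x ^ 2)) x :=
  ((hasDerivAt_log_div_self hx).const_mul _).congr_of_eventuallyEq
    (deriv_gbmJ_space_eventuallyEq Q t₁ t hx)

/-- The cost-to-go `J(t,x) = Q(log x)²/(2(Q(t₁-t)+1)) + (1/2)log(Q(t₁-t)+1)` satisfies the
HJB equation `∂ₜJ = (1/2)(x ∂ₓJ)² - (x/2)∂ₓJ - (1/2)x² ∂ₓₓJ` of the geometric Brownian
motion control problem for all `t ≤ t₁`, `x > 0`, with boundary condition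
`J(t₁,x) = (Q/2)(log x)²`. -/
theorem gbm_hjb_solution (Q t₁ : ℝ) (hQ : 0 < Q) :
    ∀ t ≤ t₁, ∀ x > 0,
      (deriv (fun s => gbmJ Q t₁ (s, x)) t =
        (1 / 2 : ℝ) * (x * deriv (fun y => gbmJ Q t₁ (t, y)) x) ^ 2 -
          (x / 2) * deriv (fun y => gbmJ Q t₁ (t, y)) x -
          (1 / 2 : ℝ) * x ^ 2 * deriv (deriv (fun y => gbmJ Q t₁ (t, y))) x) ∧
      gbmJ Q t₁ (t₁, x) = (Q / 2) * (Real.log x) ^ 2 := by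
  intro t ht x hx
  have ha : Q * (t₁ - t) + 1 ≠ 0 := by nlinarith
  refine ⟨?_, by simp [gbmJ]; ring⟩
  rw [(hasDerivAt_gbmJ_time Q t₁ x ha).deriv, (hasDerivAt_gbmJ_space Q t₁ t hx.ne').deriv,
    (hasDerivAt_deriv_gbmJ_space Q t₁ t hx.ne').deriv]
  field_simp
  ring
end
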